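/- Let A be a linearly ordered group and G a directed po-group. Then the unrestricted Wreath product A Wr G satisfies RDP if and only if G satisfies RDP. -/

import Mathlib

/-! Riesz decomposition properties relative to explicit multiplication `mul`,
unit `one`, and order relation `le`, together with the lexicographic product
order and (unrestricted/restricted, right/left) wreath products of po-groups. -/

/-- The Riesz decomposition property (RDP). -/
def RDPWith {M : Type*} (mul : M → M → M) (one : M) (le : M → M → Prop) : Prop :=
  ∀ a₁ a₂ b₁ b₂ : M,
    le one a₁ → le one a₂ → le one b₁ → le one b₂ → mul a₁ a₂ = mul b₁ b₂ →
    ∃ c₁₁ c₁₂ c₂₁ c₂₂ : M,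
      le one c₁₁ ∧ le one c₁₂ ∧ le one c₂₁ ∧ le one c₂₂ ∧
      a₁ = mul c₁₁ c₁₂ ∧ a₂ = mul c₂₁ c₂₂ ∧ b₁ = mul c₁₁ c₂₁ ∧ b₂ = mul c₁₂ c₂₂

/-- The Riesz decomposition property RDP₁ (commutativity below the
cross-diagonal entries `c₁₂`, `c₂₁`). -/
def RDP1With {M : Type*} (mul : M → M → M) (one : M) (le : M → M → Prop) : Prop :=
  ∀ a₁ a₂ b₁ b₂ : M,
    le one a₁ → le one a₂ → le one b₁ → le one b₂ → mul a₁ a₂ = mul b₁ b₂ →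
    ∃ c₁₁ c₁₂ c₂₁ c₂₂ : M,
      le one c₁₁ ∧ le one c₁₂ ∧ le one c₂₁ ∧ le one c₂₂ ∧
      a₁ = mul c₁₁ c₁₂ ∧ a₂ = mul c₂₁ c₂₂ ∧ b₁ = mul c₁₁ c₂₁ ∧ b₂ = mul c₁₂ c₂₂ ∧
      (∀ x y : M, le one x → le x c₁₂ → le one y → le y c₂₁ → mul x y = mul y x)

/-- The Riesz decomposition property RDP₂ (the infimum of `c₁₂` and `c₂₁`
exists and equals `one`; the last clause, together with `le one c₁₂` and
`le one c₂₁`, says exactly that `one` is the greatest lower bound). -/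
def RDP2With {M : Type*} (mul : M → M → M) (one : M) (le : M → M → Prop) : Prop :=
  ∀ a₁ a₂ b₁ b₂ : M,
    le one a₁ → le one a₂ → le one b₁ → le one b₂ → mul a₁ a₂ = mul b₁ b₂ →
    ∃ c₁₁ c₁₂ c₂₁ c₂₂ : M,
      le one c₁₁ ∧ le one c₁₂ ∧ le one c₂₁ ∧ le one c₂₂ ∧
      a₁ = mul c₁₁ c₁₂ ∧ a₂ = mul c₂₁ c₂₂ ∧ b₁ = mul c₁₁ c₂₁ ∧ b₂ = mul c₁₂ c₂₂ ∧
      (∀ z : M, le z c₁₂ → le z c₂₁ → le z one)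

/-- RDP for the sub-po-group carried by the subset `S`. -/
def RDPWithOn {M : Type*} (S : Set M) (mul : M → M → M) (one : M)
    (le : M → M → Prop) : Prop :=
  ∀ a₁ a₂ b₁ b₂ : M, a₁ ∈ S → a₂ ∈ S → b₁ ∈ S → b₂ ∈ S →
    le one a₁ → le one a₂ → le one b₁ → le one b₂ → mul a₁ a₂ = mul b₁ b₂ →
    ∃ c₁₁ c₁₂ c₂₁ c₂₂ : M, c₁₁ ∈ S ∧ c₁₂ ∈ S ∧ c₂₁ ∈ S ∧ c₂₂ ∈ S ∧
      le one c₁₁ ∧ le one c₁₂ ∧ le one c₂₁ ∧ le one c₂₂ ∧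
      a₁ = mul c₁₁ c₁₂ ∧ a₂ = mul c₂₁ c₂₂ ∧ b₁ = mul c₁₁ c₂₁ ∧ b₂ = mul c₁₂ c₂₂

/-- RDP₁ for the sub-po-group carried by the subset `S`. -/
def RDP1WithOn {M : Type*} (S : Set M) (mul : M → M → M) (one : M)
    (le : M → M → Prop) : Prop :=
  ∀ a₁ a₂ b₁ b₂ : M, a₁ ∈ S → a₂ ∈ S → b₁ ∈ S → b₂ ∈ S →
    le one a₁ → le one a₂ → le one b₁ → le one b₂ → mul a₁ a₂ = mul b₁ b₂ →
    ∃ c₁₁ c₁₂ c₂₁ c₂₂ : M, c₁₁ ∈ S ∧ c₁₂ ∈ S ∧ c₂₁ ∈ S ∧ c₂₂ ∈ S ∧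
      le one c₁₁ ∧ le one c₁₂ ∧ le one c₂₁ ∧ le one c₂₂ ∧
      a₁ = mul c₁₁ c₁₂ ∧ a₂ = mul c₂₁ c₂₂ ∧ b₁ = mul c₁₁ c₂₁ ∧ b₂ = mul c₁₂ c₂₂ ∧
      (∀ x y : M, x ∈ S → y ∈ S →
        le one x → le x c₁₂ → le one y → le y c₂₁ → mul x y = mul y x)

/-- RDP₂ for the sub-po-group carried by the subset `S`. -/
def RDP2WithOn {M : Type*} (S : Set M) (mul : M → M → M) (one : M)
    (le : M → M → Prop) : Prop :=
  ∀ a₁ a₂ b₁ b₂ : M, a₁ ∈ S → a₂ ∈ S → b₁ ∈ S → b₂ ∈ S →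
    le one a₁ → le one a₂ → le one b₁ → le one b₂ → mul a₁ a₂ = mul b₁ b₂ →
    ∃ c₁₁ c₁₂ c₂₁ c₂₂ : M, c₁₁ ∈ S ∧ c₁₂ ∈ S ∧ c₂₁ ∈ S ∧ c₂₂ ∈ S ∧
      le one c₁₁ ∧ le one c₁₂ ∧ le one c₂₁ ∧ le one c₂₂ ∧
      a₁ = mul c₁₁ c₁₂ ∧ a₂ = mul c₂₁ c₂₂ ∧ b₁ = mul c₁₁ c₂₁ ∧ b₂ = mul c₁₂ c₂₂ ∧
      (∀ z : M, z ∈ S → le z c₁₂ → le z c₂₁ → le z one)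

/-- The Riesz interpolation property (RIP). -/
def RIPWith {M : Type*} (le : M → M → Prop) : Prop :=
  ∀ a₁ a₂ b₁ b₂ : M, le a₁ b₁ → le a₁ b₂ → le a₂ b₁ → le a₂ b₂ →
    ∃ c : M, le a₁ c ∧ le a₂ c ∧ le c b₁ ∧ le c b₂

/-- RIP for the subposet carried by the subset `S`. -/
def RIPWithOn {M : Type*} (S : Set M) (le : M → M → Prop) : Prop :=
  ∀ a₁ a₂ b₁ b₂ : M, a₁ ∈ S → a₂ ∈ S → b₁ ∈ S → b₂ ∈ S →
    le a₁ b₁ → le a₁ b₂ → le a₂ b₁ → le a₂ b₂ →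
    ∃ c ∈ S, le a₁ c ∧ le a₂ c ∧ le c b₁ ∧ le c b₂

/-- The lexicographic order on a product: `(g₁,h₁) ≤ (g₂,h₂)` iff `g₁ < g₂`,
or `g₁ = g₂` and `h₁ ≤ h₂`. -/
def lexLE {A B : Type*} [PartialOrder A] [LE B] (p q : A × B) : Prop :=
  p.1 < q.1 ∨ (p.1 = q.1 ∧ p.2 ≤ q.2)

/-- A poset is an antilattice if only comparable pairs of elements have a
join or a meet. -/
def IsAntilattice (G : Type*) [PartialOrder G] : Prop :=
  ∀ a b : G, ((∃ s, IsLUB {a, b} s) ∨ (∃ s, IsGLB {a, b} s)) → a ≤ b ∨ b ≤ a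

/-- Multiplication of the unrestricted Wreath product `A Wr G`:
`(n,⟨g_a⟩)·(m,⟨h_a⟩) = (n·m, ⟨g_a·h_{a·n}⟩)`. -/
def wrMul {A G : Type*} [Mul A] [Mul G] (p q : A × (A → G)) : A × (A → G) :=
  (p.1 * q.1, fun a => p.2 a * q.2 (a * p.1))

/-- The unit of the Wreath product `A Wr G`. -/
def wrOne (A G : Type*) [One A] [One G] : A × (A → G) :=
  (1, fun _ => 1)

/-- The order of the Wreath product `A Wr G`: `(n,⟨g_a⟩) ≤ (m,⟨h_a⟩)` iff
`n < m`, or `n = m` and `g_a ≤ h_a` for all `a`. -/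
def wrLE {A G : Type*} [PartialOrder A] [LE G] (p q : A × (A → G)) : Prop :=
  p.1 < q.1 ∨ (p.1 = q.1 ∧ ∀ a, p.2 a ≤ q.2 a)

/-- The carrier of the restricted Wreath product `A wr G`: elements whose
second component equals `1` at all but finitely many places. -/
def wrS (A G : Type*) [One G] : Set (A × (A → G)) :=
  {p | (Function.mulSupport p.2).Finite}

/-- Multiplication of the wreath products over `ℤ`:
`(n,⟨g_i⟩)·(m,⟨h_i⟩) = (n+m, ⟨g_i·h_{i+n}⟩)`. -/
def zwrMul {G : Type*} [Mul G] (p q : ℤ × (ℤ → G)) : ℤ × (ℤ → G) :=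
  (p.1 + q.1, fun i => p.2 i * q.2 (i + p.1))

/-- The unit of the wreath products over `ℤ`. -/
def zwrOne (G : Type*) [One G] : ℤ × (ℤ → G) :=
  (0, fun _ => 1)

/-- The inverse in the wreath products over `ℤ`. -/
def zwrInv {G : Type*} [Inv G] (p : ℤ × (ℤ → G)) : ℤ × (ℤ → G) :=
  (-p.1, fun i => (p.2 (i - p.1))⁻¹)

/-- The carrier of the (restricted) wreath products over `ℤ`: elements with
`g_i = 1` for all but finitely many `i`. -/
def zwrS (G : Type*) [One G] : Set (ℤ × (ℤ → G)) :=
  {p | (Function.mulSupport p.2).Finite}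

/-- Strict positivity in the right wreath product `ℤ →wr G`: either `n > 0`,
or `n = 0`, some `g_i ≠ 1`, and `g_j > 1` where `j` is the greatest index `i`
with `g_i ≠ 1`. -/
def rPos {G : Type*} [One G] [LT G] (p : ℤ × (ℤ → G)) : Prop :=
  0 < p.1 ∨ (p.1 = 0 ∧ ∃ j : ℤ, 1 < p.2 j ∧ ∀ i : ℤ, j < i → p.2 i = 1)

/-- Strict positivity in the left wreath product `ℤ ←wr G`: either `n > 0`,
or `n = 0`, some `g_i ≠ 1`, and `g_j > 1` where `j` is the least index `i`
with `g_i ≠ 1`. -/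
def lPos {G : Type*} [One G] [LT G] (p : ℤ × (ℤ → G)) : Prop :=
  0 < p.1 ∨ (p.1 = 0 ∧ ∃ j : ℤ, 1 < p.2 j ∧ ∀ i : ℤ, i < j → p.2 i = 1)

/-- The order of the right wreath product `ℤ →wr G`. -/
def rLE {G : Type*} [Group G] [LT G] (p q : ℤ × (ℤ → G)) : Prop :=
  p = q ∨ rPos (zwrMul (zwrInv p) q)

/-- The order of the left wreath product `ℤ ←wr G`. -/
def lLE {G : Type*} [Group G] [LT G] (p q : ℤ × (ℤ → G)) : Prop :=
  p = q ∨ lPos (zwrMul (zwrInv p) q)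

/-!
Let `(n₁,f)(n₂,g) = (m₁,h)(m₂,k)` in `A Wr G` with positive factors. If `n₁ < m₁`, then
`(n₁,f)⁻¹(m₁,h)` is strictly positive, so `((n₁,f), 1, (n₁,f)⁻¹(m₁,h), (m₂,k))` is a
decomposition; `n₁ > m₁` is symmetric. If `n₁ = m₁`, then `n₂ = m₂` and the equation reads
`f a · g (a n₁) = h a · k (a n₁)` for every `a`, which RDP of `G` decomposes coordinatewise.
The coordinates of a factor with shift `> 1` need not be positive; directedness of `G` gives a
correction `t` with `t a · f a, t a · h a ≥ 1`, and multiplying it back in cannot spoil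
positivity of a factor with shift `> 1` (for shift `1` take `t = 1`).
Conversely, `G` sits in `A Wr G` as the constant functions with shift `1`, and a decomposition
of such elements has all shifts `1` because `1` has no nontrivial factorisation in `A⁺`.
-/

section Riesz

variable {M : Type*} {mul : M → M → M} {one : M} {le : M → M → Prop}

def RieszDecomposable (mul : M → M → M) (one : M) (le : M → M → Prop) (a₁ a₂ b₁ b₂ : M) :
    Prop :=
  ∃ c₁₁ c₁₂ c₂₁ c₂₂ : M,
    le one c₁₁ ∧ le one c₁₂ ∧ le one c₂₁ ∧ le one c₂₂ ∧
    a₁ = mul c₁₁ c₁₂ ∧ a₂ = mul c₂₁ c₂₂ ∧ b₁ = mul c₁₁ c₂₁ ∧ b₂ = mul c₁₂ c₂₂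

theorem rdpWith_iff : RDPWith mul one le ↔ ∀ a₁ a₂ b₁ b₂ : M,
    le one a₁ → le one a₂ → le one b₁ → le one b₂ → mul a₁ a₂ = mul b₁ b₂ →
    RieszDecomposable mul one le a₁ a₂ b₁ b₂ :=
  Iff.rfl

theorem RieszDecomposable.symm {a₁ a₂ b₁ b₂ : M}
    (h : RieszDecomposable mul one le a₁ a₂ b₁ b₂) : RieszDecomposable mul one le b₁ b₂ a₁ a₂ :=
  let ⟨c₁₁, c₁₂, c₂₁, c₂₂, h₁₁, h₁₂, h₂₁, h₂₂, ha₁, ha₂, hb₁, hb₂⟩ := h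
  ⟨c₁₁, c₂₁, c₁₂, c₂₂, h₁₁, h₂₁, h₁₂, h₂₂, hb₁, hb₂, ha₁, ha₂⟩

theorem RDPWith.pi {ι G : Type*} [Mul G] [One G] [LE G]
    (h : RDPWith (fun a b : G => a * b) 1 (· ≤ ·)) :
    RDPWith (fun f g : ι → G => f * g) 1 (· ≤ ·) := by
  intro a₁ a₂ b₁ b₂ ha₁ ha₂ hb₁ hb₂ heq
  choose c₁₁ c₁₂ c₂₁ c₂₂ h₁₁ h₁₂ h₂₁ h₂₂ e₁ e₂ e₃ e₄ using fun i =>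
    h (a₁ i) (a₂ i) (b₁ i) (b₂ i) (ha₁ i) (ha₂ i) (hb₁ i) (hb₂ i) (congrFun heq i)
  exact ⟨c₁₁, c₁₂, c₂₁, c₂₂, h₁₁, h₁₂, h₂₁, h₂₂, funext e₁, funext e₂, funext e₃, funext e₄⟩

end Riesz

theorem eq_one_and_eq_one_of_mul_eq_one {M : Type*} [Monoid M] [PartialOrder M] [MulLeftMono M]
    {a b : M} (ha : 1 ≤ a) (hb : 1 ≤ b) (h : a * b = 1) : a = 1 ∧ b = 1 := by
  have ha' : a = 1 := le_antisymm (h ▸ le_mul_of_one_le_right' hb) ha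
  exact ⟨ha', by simpa [ha'] using h⟩

section WreathProduct

variable {A G : Type*}

def wrInv [Group A] [Group G] (p : A × (A → G)) : A × (A → G) :=
  (p.1⁻¹, fun a => (p.2 (a * p.1⁻¹))⁻¹)

section Algebra

variable (p q r : A × (A → G))

theorem wrMul_assoc [Semigroup A] [Semigroup G] :
    wrMul (wrMul p q) r = wrMul p (wrMul q r) := by
  simp [wrMul, mul_assoc]

theorem wrMul_wrOne [Monoid A] [Monoid G] : wrMul p (wrOne A G) = p := by
  simp [wrMul, wrOne]

theorem wrOne_wrMul [Monoid A] [Monoid G] : wrMul (wrOne A G) p = p := by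
  simp [wrMul, wrOne]

variable [Group A] [Group G]

theorem wrMul_wrInv_cancel_left : wrMul p (wrMul (wrInv p) q) = q := by
  simp [wrMul, wrInv]

theorem wrInv_wrMul_cancel_left : wrMul (wrInv p) (wrMul p q) = q := by
  simp [wrMul, wrInv]

end Algebra

section Order

variable [One A] [PartialOrder A] [One G] {p : A × (A → G)}

theorem wrLE_wrOne_iff [LE G] :
    wrLE (wrOne A G) p ↔ 1 < p.1 ∨ p.1 = 1 ∧ ∀ a, 1 ≤ p.2 a := by
  simp [wrLE, wrOne, eq_comm]

theorem one_le_fst_of_wrLE_wrOne [LE G] (hp : wrLE (wrOne A G) p) : 1 ≤ p.1 :=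
  (wrLE_wrOne_iff.1 hp).elim le_of_lt fun h => h.1.ge

theorem one_le_snd_of_wrLE_wrOne [LE G] (hp : wrLE (wrOne A G) p) (h1 : p.1 = 1) (a : A) :
    1 ≤ p.2 a :=
  ((wrLE_wrOne_iff.1 hp).resolve_left h1.not_gt).2 a

theorem wrLE_wrOne_wrOne [Preorder G] : wrLE (wrOne A G) (wrOne A G) :=
  Or.inr ⟨rfl, fun _ => le_rfl⟩

end Order

theorem RDPWith.of_wreath [Monoid A] [PartialOrder A] [MulLeftMono A] [Mul G] [One G] [LE G]
    (h : RDPWith (wrMul : A × (A → G) → _ → _) (wrOne A G) wrLE) :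
    RDPWith (fun a b : G => a * b) 1 (· ≤ ·) := by
  intro a₁ a₂ b₁ b₂ ha₁ ha₂ hb₁ hb₂ heq
  let const : G → A × (A → G) := fun g => (1, fun _ => g)
  have hconst {g : G} (hg : 1 ≤ g) : wrLE (wrOne A G) (const g) := Or.inr ⟨rfl, fun _ => hg⟩
  obtain ⟨c₁₁, c₁₂, c₂₁, c₂₂, h₁₁, h₁₂, h₂₁, h₂₂, e₁, e₂, e₃, e₄⟩ :=
    h (const a₁) (const a₂) (const b₁) (const b₂) (hconst ha₁) (hconst ha₂) (hconst hb₁)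
      (hconst hb₂) (by simp [const, wrMul, heq])
  have shift_eq_one {c d : A × (A → G)} (hc : wrLE (wrOne A G) c) (hd : wrLE (wrOne A G) d)
      {g : G} (e : const g = wrMul c d) : c.1 = 1 ∧ d.1 = 1 :=
    eq_one_and_eq_one_of_mul_eq_one (one_le_fst_of_wrLE_wrOne hc) (one_le_fst_of_wrLE_wrOne hd)
      (congrArg Prod.fst e).symm
  obtain ⟨s₁₁, s₁₂⟩ := shift_eq_one h₁₁ h₁₂ e₁
  obtain ⟨-, s₂₁⟩ := shift_eq_one h₁₁ h₂₁ e₃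
  obtain ⟨-, s₂₂⟩ := shift_eq_one h₂₁ h₂₂ e₂
  refine ⟨c₁₁.2 1, c₁₂.2 1, c₂₁.2 1, c₂₂.2 1, one_le_snd_of_wrLE_wrOne h₁₁ s₁₁ 1,
    one_le_snd_of_wrLE_wrOne h₁₂ s₁₂ 1, one_le_snd_of_wrLE_wrOne h₂₁ s₂₁ 1,
    one_le_snd_of_wrLE_wrOne h₂₂ s₂₂ 1, ?_, ?_, ?_, ?_⟩
  · simpa [wrMul, s₁₁] using congrFun (congrArg Prod.snd e₁) 1
  · simpa [wrMul, s₂₁] using congrFun (congrArg Prod.snd e₂) 1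
  · simpa [wrMul, s₁₁] using congrFun (congrArg Prod.snd e₃) 1
  · simpa [wrMul, s₁₂] using congrFun (congrArg Prod.snd e₄) 1

theorem RieszDecomposable.wrMul_of_fst_lt [Group A] [PartialOrder A] [MulLeftMono A]
    [Group G] [Preorder G] {p₁ p₂ q₁ q₂ : A × (A → G)} (hp₁ : wrLE (wrOne A G) p₁)
    (hq₂ : wrLE (wrOne A G) q₂) (heq : wrMul p₁ p₂ = wrMul q₁ q₂) (hlt : p₁.1 < q₁.1) :
    RieszDecomposable wrMul (wrOne A G) wrLE p₁ p₂ q₁ q₂ := by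
  refine ⟨p₁, wrOne A G, wrMul (wrInv p₁) q₁, q₂, hp₁, wrLE_wrOne_wrOne,
    Or.inl (lt_inv_mul_iff_lt.2 hlt), hq₂, (wrMul_wrOne p₁).symm, ?_,
    (wrMul_wrInv_cancel_left p₁ q₁).symm, (wrOne_wrMul q₂).symm⟩
  rw [wrMul_assoc, ← heq, wrInv_wrMul_cancel_left]

section Directed

variable [One A] [PartialOrder A] [Group G] [PartialOrder G] {n : A} {f h : A → G}

theorem exists_left_correction [MulRightMono G] (hdir : ∀ x y : G, ∃ z : G, x ≤ z ∧ y ≤ z)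
    (hf : wrLE (wrOne A G) (n, f)) (hh : wrLE (wrOne A G) (n, h)) :
    ∃ t : A → G, 1 ≤ t * f ∧ 1 ≤ t * h ∧ ∀ φ : A → G, 1 ≤ φ → wrLE (wrOne A G) (n, t⁻¹ * φ) := by
  rcases wrLE_wrOne_iff.1 hf with hn | ⟨hn, hf⟩
  · choose t hft hht using fun a => hdir (f a)⁻¹ (h a)⁻¹
    exact ⟨t, fun a => inv_le_iff_one_le_mul.1 (hft a), fun a => inv_le_iff_one_le_mul.1 (hht a),
      fun _ _ => Or.inl hn⟩
  · have hh := one_le_snd_of_wrLE_wrOne hh hn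
    exact ⟨1, by simpa [Pi.le_def] using hf, by simpa [Pi.le_def] using hh,
      fun φ hφ => Or.inr ⟨hn.symm, fun a => by simpa [wrOne] using hφ a⟩⟩

theorem exists_right_correction [MulLeftMono G] (hdir : ∀ x y : G, ∃ z : G, x ≤ z ∧ y ≤ z)
    (hf : wrLE (wrOne A G) (n, f)) (hh : wrLE (wrOne A G) (n, h)) :
    ∃ t : A → G, 1 ≤ f * t ∧ 1 ≤ h * t ∧ ∀ φ : A → G, 1 ≤ φ → wrLE (wrOne A G) (n, φ * t⁻¹) := by
  rcases wrLE_wrOne_iff.1 hf with hn | ⟨hn, hf⟩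
  · choose t hft hht using fun a => hdir (f a)⁻¹ (h a)⁻¹
    exact ⟨t, fun a => inv_le_iff_one_le_mul'.1 (hft a), fun a => inv_le_iff_one_le_mul'.1 (hht a),
      fun _ _ => Or.inl hn⟩
  · have hh := one_le_snd_of_wrLE_wrOne hh hn
    exact ⟨1, by simpa [Pi.le_def] using hf, by simpa [Pi.le_def] using hh,
      fun φ hφ => Or.inr ⟨hn.symm, fun a => by simpa [wrOne] using hφ a⟩⟩

end Directed

theorem RieszDecomposable.wrMul_of_fst_eq [Group A] [PartialOrder A] [Group G] [PartialOrder G]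
    [MulLeftMono G] [MulRightMono G] (hG : RDPWith (fun a b : G => a * b) 1 (· ≤ ·))
    (hdir : ∀ x y : G, ∃ z : G, x ≤ z ∧ y ≤ z) {p₁ p₂ q₁ q₂ : A × (A → G)}
    (hp₁ : wrLE (wrOne A G) p₁) (hp₂ : wrLE (wrOne A G) p₂) (hq₁ : wrLE (wrOne A G) q₁)
    (hq₂ : wrLE (wrOne A G) q₂) (heq : wrMul p₁ p₂ = wrMul q₁ q₂) (hfst : p₁.1 = q₁.1) :
    RieszDecomposable wrMul (wrOne A G) wrLE p₁ p₂ q₁ q₂ := by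
  obtain ⟨n, f⟩ := p₁
  obtain ⟨n₂, g⟩ := p₂
  obtain ⟨m, h⟩ := q₁
  obtain ⟨m₂, k⟩ := q₂
  obtain rfl : n = m := hfst
  obtain rfl : n₂ = m₂ := mul_left_cancel (congrArg Prod.fst heq)
  have hcoord (a : A) : f a * g (a * n) = h a * k (a * n) := congrFun (congrArg Prod.snd heq) a
  obtain ⟨t, htf, hth, ht⟩ := exists_left_correction hdir hp₁ hq₁
  obtain ⟨s, hsg, hsk, hs⟩ := exists_right_correction hdir hp₂ hq₂
  obtain ⟨d₁₁, d₁₂, d₂₁, d₂₂, hd₁₁, hd₁₂, hd₂₁, hd₂₂, e₁, e₂, e₃, e₄⟩ :=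
    hG.pi (t * f) (fun a => g (a * n) * s (a * n)) (t * h) (fun a => k (a * n) * s (a * n))
      htf (fun a => hsg (a * n)) hth (fun a => hsk (a * n))
      (funext fun a => by simp only [Pi.mul_apply, mul_assoc, ← mul_assoc (f a), hcoord])
  refine ⟨(n, t⁻¹ * d₁₁), (1, fun a => d₁₂ (a * n⁻¹)), (1, fun a => d₂₁ (a * n⁻¹)),
    (n₂, (fun a => d₂₂ (a * n⁻¹)) * s⁻¹), ht d₁₁ hd₁₁, Or.inr ⟨rfl, fun a => hd₁₂ (a * n⁻¹)⟩,
    Or.inr ⟨rfl, fun a => hd₂₁ (a * n⁻¹)⟩, hs _ fun a => hd₂₂ (a * n⁻¹), ?_, ?_, ?_, ?_⟩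
  · simp [wrMul, eq_inv_mul_of_mul_eq e₁.symm, mul_assoc]
  · simp [wrMul, eq_mul_inv_of_mul_eq e₂.symm, mul_assoc]
  · simp [wrMul, eq_inv_mul_of_mul_eq e₃.symm, mul_assoc]
  · simp [wrMul, eq_mul_inv_of_mul_eq e₄.symm, mul_assoc]

theorem RDPWith.wreath [Group A] [LinearOrder A] [MulLeftMono A] [Group G] [PartialOrder G]
    [MulLeftMono G] [MulRightMono G] (hG : RDPWith (fun a b : G => a * b) 1 (· ≤ ·))
    (hdir : ∀ x y : G, ∃ z : G, x ≤ z ∧ y ≤ z) :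
    RDPWith (wrMul : A × (A → G) → _ → _) (wrOne A G) wrLE := by
  refine rdpWith_iff.2 fun p₁ p₂ q₁ q₂ hp₁ hp₂ hq₁ hq₂ heq => ?_
  rcases lt_trichotomy p₁.1 q₁.1 with hlt | hfst | hgt
  · exact .wrMul_of_fst_lt hp₁ hq₂ heq hlt
  · exact .wrMul_of_fst_eq hG hdir hp₁ hp₂ hq₁ hq₂ heq hfst
  · exact (RieszDecomposable.wrMul_of_fst_lt hq₁ hp₂ heq.symm hgt).symm

end WreathProduct

theorem wreath_rdp_iff_general {A G : Type*} [Group A] [LinearOrder A]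
    [CovariantClass A A (· * ·) (· ≤ ·)]
    [Group G] [PartialOrder G]
    [CovariantClass G G (· * ·) (· ≤ ·)]
    [CovariantClass G G (Function.swap (· * ·)) (· ≤ ·)]
    (hdir : ∀ x y : G, ∃ z : G, x ≤ z ∧ y ≤ z) :
    RDPWith (fun p q : A × (A → G) => wrMul p q) (wrOne A G) wrLE ↔
      RDPWith (fun a b : G => a * b) 1 (· ≤ ·) :=
  ⟨RDPWith.of_wreath, fun hG => RDPWith.wreath hG hdir⟩

/-- For a linearly ordered group `A` and a directed po-group `G`,
the unrestricted Wreath product `A Wr G` satisfies RDP iff `G` does. -/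
theorem wreath_rdp_iff {A G : Type*} [Group A] [LinearOrder A]
    [CovariantClass A A (· * ·) (· ≤ ·)]
    [CovariantClass A A (Function.swap (· * ·)) (· ≤ ·)]
    [Group G] [PartialOrder G]
    [CovariantClass G G (· * ·) (· ≤ ·)]
    [CovariantClass G G (Function.swap (· * ·)) (· ≤ ·)]
    (hdir : ∀ x y : G, ∃ z : G, x ≤ z ∧ y ≤ z) :
    RDPWith (fun p q : A × (A → G) => wrMul p q) (wrOne A G) wrLE ↔
      RDPWith (fun a b : G => a * b) 1 (· ≤ ·) :=
  wreath_rdp_iff_general hdir
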